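/- For all objects X, Z of ℰ and all i ≥ 0 there is a functorial isomorphism Ext_F^i(X,Z) ≅ Ext^i_C(FX, FZ), where Ext_F denotes the extension groups of the exact structure on ℰ given by the F-exact sequences. -/

import Mathlib

noncomputable section
open CategoryTheory Limits Pretriangulated

universe v u v' u'

/-! ### Generic tools in a `k`-linear category -/

section LinearTools

variable (k : Type) [Field k]
variable (D : Type u) [Category.{v} D] [Preadditive D] [CategoryTheory.Linear k D]
  [HasZeroObject D] [HasFiniteBiproducts D] [HasBinaryBiproducts D]

/-- An object is indecomposable if it is non-zero and admits no non-trivial direct sum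
decomposition. -/
def Indec (X : D) : Prop :=
  ¬ IsZero X ∧ ∀ Y Z : D, Nonempty (X ≅ Y ⊞ Z) → IsZero Y ∨ IsZero Z

/-- `X` lies in `add T`: it is a direct factor of a finite direct sum of copies of `T`. -/
def InAdd (T X : D) : Prop :=
  ∃ (m : ℕ) (Z : D), Nonempty ((X ⊞ Z) ≅ (⨁ fun _ : Fin m => T))

/-- The indecomposable `U` occurs with multiplicity `m` as a direct factor of `Y`. -/
def HasMult (U Y : D) (m : ℕ) : Prop :=
  ∃ Y' : D, Nonempty (Y ≅ (⨁ fun _ : Fin m => U) ⊞ Y') ∧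
    ¬ ∃ Z : D, Nonempty (Y' ≅ U ⊞ Z)

/-- The radical: `f ∈ rad(X,Y)` iff `𝟙 X - f ≫ g` is invertible for all `g : Y ⟶ X`. -/
def radSet (X Y : D) : Set (X ⟶ Y) := {f | ∀ g : Y ⟶ X, IsIso (𝟙 X - f ≫ g)}

def radSub (X Y : D) : Submodule k (X ⟶ Y) := Submodule.span k (radSet D X Y)

/-- The square of the radical, relative to a class `T` of middle objects. -/
def radSqSub (T : Set D) (X Y : D) : Submodule k (X ⟶ Y) :=
  Submodule.span k
    {h | ∃ Z ∈ T, ∃ f : X ⟶ Z, ∃ g : Z ⟶ Y, f ∈ radSet D X Z ∧ g ∈ radSet D Z Y ∧ h = f ≫ g}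

/-- Number of arrows from `X` to `Y` in the quiver of the subcategory `T`:
`dim_k rad(X,Y)/rad²(X,Y)`. -/
def numArrows (T : Set D) (X Y : D) : ℕ :=
  Module.finrank k
    (↥(radSub k D X Y) ⧸ Submodule.comap (radSub k D X Y).subtype (radSqSub k D T X Y))

/-- Entry of the antisymmetric matrix attached to the quiver of the subcategory `T`. -/
def bmat (T : Set D) (X Y : D) : ℤ :=
  (numArrows k D T X Y : ℤ) - numArrows k D T Y X

/-- Entries of the antisymmetric matrix of the quiver of the endomorphism algebra of the
object `⨁ Tob i`. -/
def bmatOf {n : ℕ} (Tob : Fin n → D) (i j : Fin n) : ℤ :=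
  bmat k D {Z : D | InAdd D (⨁ Tob) Z} (Tob i) (Tob j)

/-- The direct sum `⨁_i Tob i ^{a i}`. -/
def TT {n : ℕ} (Tob : Fin n → D) (a : Fin n → ℕ) : D :=
  ⨁ fun p : (Σ i : Fin n, Fin (a i)) => Tob p.1

end LinearTools

/-! ### Exact and Frobenius structures (Quillen exact categories) -/

section Exact

variable (k : Type) [Field k]
variable (E : Type u) [Category.{v} E] [Preadditive E] [CategoryTheory.Linear k E]
  [HasZeroObject E] [HasFiniteBiproducts E] [HasBinaryBiproducts E]
  [∀ X Y : E, FiniteDimensional k (X ⟶ Y)]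

/-- An exact structure on the additive category `E`, given by its class of conflations
`0 → X →f Y →g Z → 0`. -/
structure ExStruct where
  IsConf : ∀ ⦃X Y Z : E⦄, (X ⟶ Y) → (Y ⟶ Z) → Prop
  comp_zero : ∀ {X Y Z : E} (f : X ⟶ Y) (g : Y ⟶ Z), IsConf f g → f ≫ g = 0
  is_kernel : ∀ {X Y Z : E} (f : X ⟶ Y) (g : Y ⟶ Z), IsConf f g →
      ∀ {W : E} (h : W ⟶ Y), h ≫ g = 0 → ∃! l : W ⟶ X, l ≫ f = h
  is_cokernel : ∀ {X Y Z : E} (f : X ⟶ Y) (g : Y ⟶ Z), IsConf f g →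
      ∀ {W : E} (h : Y ⟶ W), f ≫ h = 0 → ∃! l : Z ⟶ W, g ≫ l = h
  split_conf : ∀ X Z : E, IsConf (biprod.inl : X ⟶ X ⊞ Z) (biprod.snd : X ⊞ Z ⟶ Z)
  iso_closed : ∀ {X Y Z X' Y' Z' : E} (f : X ⟶ Y) (g : Y ⟶ Z)
      (iX : X' ≅ X) (iY : Y' ≅ Y) (iZ : Z' ≅ Z), IsConf f g →
      IsConf (iX.hom ≫ f ≫ iY.inv) (iY.hom ≫ g ≫ iZ.inv)
  defl_comp : ∀ {X Y Z X' Y' : E} (f : X ⟶ Y) (g : Y ⟶ Z) (f' : X' ⟶ Y') (g' : Y' ⟶ Y),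
      IsConf f g → IsConf f' g' → ∃ (K : E) (u : K ⟶ Y'), IsConf u (g' ≫ g)

variable {E}

/-- `P` is projective for the exact structure `ε`. -/
def ExStruct.Proj (ε : ExStruct E) (P : E) : Prop :=
  ∀ {X Y Z : E} (f : X ⟶ Y) (g : Y ⟶ Z), ε.IsConf f g → ∀ h : P ⟶ Z, ∃ l : P ⟶ Y, l ≫ g = h

/-- `I` is injective for the exact structure `ε`. -/
def ExStruct.Inj (ε : ExStruct E) (I : E) : Prop :=
  ∀ {X Y Z : E} (f : X ⟶ Y) (g : Y ⟶ Z), ε.IsConf f g → ∀ h : X ⟶ I, ∃ l : Y ⟶ I, f ≫ l = h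

/-- `Ext¹_ε(A, X) = 0`: every conflation `0 → X → M → A → 0` splits. -/
def ExStruct.Ext1Zero (ε : ExStruct E) (A X : E) : Prop :=
  ∀ {M : E} (f : X ⟶ M) (g : M ⟶ A), ε.IsConf f g → ∃ s : A ⟶ M, s ≫ g = 𝟙 A

/-- `X` is a rigid object: `Ext¹_ε(X, X) = 0`. -/
def ExStruct.Rigid (ε : ExStruct E) (X : E) : Prop := ε.Ext1Zero X X

/-- `ε` makes `E` a Frobenius category: it has enough projectives and enough injectives,
and projectives and injectives coincide. -/
structure ExStruct.IsFrobenius (ε : ExStruct E) : Prop where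
  enough_proj : ∀ X : E, ∃ (P K : E) (g : P ⟶ X) (f : K ⟶ P), ε.Proj P ∧ ε.IsConf f g
  enough_inj : ∀ X : E, ∃ (I CK : E) (f : X ⟶ I) (g : I ⟶ CK), ε.Inj I ∧ ε.IsConf f g
  proj_iff_inj : ∀ P : E, ε.Proj P ↔ ε.Inj P

/-- `T` is a cluster-tilting object of `(E, ε)`: it is rigid and `X ∈ add T` iff
`Ext¹_ε(T, X) = 0`. -/
def ExStruct.IsCT (ε : ExStruct E) (T : E) : Prop :=
  ε.Rigid T ∧ ∀ X : E, InAdd E T X ↔ ε.Ext1Zero T X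

/-- A conflation is `F`-exact (`F = Hom(T, ?)`) iff every map `T ⟶ Z` lifts along the
deflation. -/
def ExStruct.FExact (ε : ExStruct E) (T : E) {X Y Z : E} (f : X ⟶ Y) (g : Y ⟶ Z) : Prop :=
  ε.IsConf f g ∧ ∀ q : T ⟶ Z, ∃ l : T ⟶ Y, l ≫ g = q

/-- `g : Fin n → ℤ` is the index `ind_T(M)` with respect to the cluster-tilting object
`T = ⨁ Tob i`: there is a minimal conflation `0 → ⨁ Tob^b → ⨁ Tob^a → M → 0` whose
deflation is a (minimal) right `add T`-approximation, and `g = a - b`. -/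
def ExStruct.IsIndex (ε : ExStruct E) {n : ℕ} (Tob : Fin n → E) (M : E)
    (g : Fin n → ℤ) : Prop :=
  ∃ (a b : Fin n → ℕ) (f : TT E Tob b ⟶ TT E Tob a) (p : TT E Tob a ⟶ M),
    ε.IsConf f p ∧
    (∀ (i : Fin n) (q : Tob i ⟶ M), ∃ l : Tob i ⟶ TT E Tob a, l ≫ p = q) ∧
    (∀ φ : TT E Tob a ⟶ TT E Tob a, φ ≫ p = p → IsIso φ) ∧
    (∀ i, g i = (a i : ℤ) - (b i : ℤ))

/-- `X` has no non-zero `ε`-projective direct factor. -/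
def ExStruct.NoProjFactor (ε : ExStruct E) (X : E) : Prop :=
  ¬ ∃ P Z : E, ε.Proj P ∧ ¬ IsZero P ∧ Nonempty (X ≅ P ⊞ Z)

/-- One step of mutation of cluster-tilting objects of `(E, ε)`: two cluster-tilting
objects sharing all indecomposable direct factors except one non-projective one. -/
def ExStruct.CTMutRel (ε : ExStruct E) (R R' : E) : Prop :=
  ε.IsCT R ∧ ε.IsCT R' ∧
    ∃ Z M M' : E, Indec E M ∧ Indec E M' ∧ ¬ ε.Proj M ∧ ¬ ε.Proj M' ∧
      ¬ Nonempty (M ≅ M') ∧ Nonempty (R ≅ Z ⊞ M) ∧ Nonempty (R' ≅ Z ⊞ M')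

/-- The cluster-tilting object `R` is reachable from `T`. -/
def ExStruct.CTReachable (ε : ExStruct E) (T R : E) : Prop :=
  Relation.ReflTransGen ε.CTMutRel T R

/-- The indecomposable rigid object `M` is reachable from `T`. -/
def ExStruct.RigidReachable (ε : ExStruct E) (T M : E) : Prop :=
  ∃ R : E, ε.CTReachable T R ∧ InAdd E R M

/-- The cluster-tilting subcategories determine a cluster structure on the Frobenius
category `(E, ε)` in the sense of Buan–Iyama–Reiten–Scott (conditions (1)–(4), stated for
cluster-tilting objects). -/
structure ExStruct.ClusterStructure (ε : ExStruct E) : Prop where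
  /- (1) unique exchange: existence -/
  mut_exists : ∀ R Z M : E, ε.IsCT R → Indec E M → ¬ ε.Proj M → Nonempty (R ≅ Z ⊞ M) →
      ∃ M' : E, Indec E M' ∧ ¬ ε.Proj M' ∧ ¬ Nonempty (M' ≅ M) ∧ ε.IsCT (Z ⊞ M')
  /- (1) unique exchange: uniqueness -/
  mut_unique : ∀ R Z M : E, ε.IsCT R → Indec E M → ¬ ε.Proj M → Nonempty (R ≅ Z ⊞ M) →
      ∀ M₁ M₂ : E, Indec E M₁ → ¬ Nonempty (M₁ ≅ M) → ε.IsCT (Z ⊞ M₁) →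
        Indec E M₂ → ¬ Nonempty (M₂ ≅ M) → ε.IsCT (Z ⊞ M₂) → Nonempty (M₁ ≅ M₂)
  /- (2) exchange conflations with minimal approximations -/
  exch_confl : ∀ Z M M' : E, Indec E M → Indec E M' → ¬ Nonempty (M' ≅ M) →
      ε.IsCT (Z ⊞ M) → ε.IsCT (Z ⊞ M') →
      ∃ (Y Y' : E) (f : M' ⟶ Y) (g : Y ⟶ M) (s : M ⟶ Y') (t : Y' ⟶ M'),
        ε.IsConf f g ∧ ε.IsConf s t ∧ InAdd E Z Y ∧ InAdd E Z Y' ∧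
        (∀ (U : E) (q : U ⟶ M), InAdd E Z U → ∃ l : U ⟶ Y, l ≫ g = q) ∧
        (∀ e : Y ⟶ Y, e ≫ g = g → IsIso e) ∧
        (∀ (U : E) (q : M' ⟶ U), InAdd E Z U → ∃ l : Y ⟶ U, f ≫ l = q) ∧
        (∀ e : Y ⟶ Y, f ≫ e = f → IsIso e) ∧
        (∀ (U : E) (q : U ⟶ M'), InAdd E Z U → ∃ l : U ⟶ Y', l ≫ t = q) ∧
        (∀ e : Y' ⟶ Y', e ≫ t = t → IsIso e) ∧
        (∀ (U : E) (q : M ⟶ U), InAdd E Z U → ∃ l : Y' ⟶ U, s ≫ l = q) ∧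
        (∀ e : Y' ⟶ Y', s ≫ e = s → IsIso e)
  /- (3) no loops and no 2-cycles in the quiver of any cluster-tilting object -/
  no_loops : ∀ R M : E, ε.IsCT R → Indec E M → InAdd E R M →
      numArrows k E {W : E | InAdd E R W} M M = 0
  no_two_cycles : ∀ R M N : E, ε.IsCT R → Indec E M → Indec E N →
      InAdd E R M → InAdd E R N → ¬ Nonempty (M ≅ N) →
      ¬ (0 < numArrows k E {W : E | InAdd E R W} M N ∧
         0 < numArrows k E {W : E | InAdd E R W} N M)
  /- (4) mutation of cluster-tilting objects is compatible with Fomin–Zelevinsky mutation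
  of the matrices of the quivers `Q°` (arrows between projective vertices removed) -/
  quiver_mutation : ∀ Z M M' : E, Indec E M → Indec E M' → ¬ ε.Proj M → ¬ ε.Proj M' →
      ¬ Nonempty (M' ≅ M) → ε.IsCT (Z ⊞ M) → ε.IsCT (Z ⊞ M') →
      (∀ X Y : E, Indec E X → Indec E Y → InAdd E Z X → InAdd E Z Y →
        ¬ (ε.Proj X ∧ ε.Proj Y) →
          bmat k E {W : E | InAdd E (Z ⊞ M') W} X Y =
            bmat k E {W : E | InAdd E (Z ⊞ M) W} X Y +
              (bmat k E {W : E | InAdd E (Z ⊞ M) W} X M).sign *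
                max (bmat k E {W : E | InAdd E (Z ⊞ M) W} X M *
                     bmat k E {W : E | InAdd E (Z ⊞ M) W} M Y) 0) ∧
      (∀ X : E, Indec E X → InAdd E Z X →
          bmat k E {W : E | InAdd E (Z ⊞ M') W} X M' =
            - bmat k E {W : E | InAdd E (Z ⊞ M) W} X M ∧
          bmat k E {W : E | InAdd E (Z ⊞ M') W} M' X =
            - bmat k E {W : E | InAdd E (Z ⊞ M) W} M X)

end Exact

/-! ### The stable category: a 2-Calabi–Yau triangulated quotient -/

section Stable

variable (k : Type) [Field k]
variable (E : Type u) [Category.{v} E] [Preadditive E] [CategoryTheory.Linear k E]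
  [HasZeroObject E] [HasFiniteBiproducts E] [HasBinaryBiproducts E]
  [∀ X Y : E, FiniteDimensional k (X ⟶ Y)]
variable (Cst : Type u') [Category.{v'} Cst] [Preadditive Cst]
  [CategoryTheory.Linear k Cst] [HasZeroObject Cst] [HasShift Cst ℤ]
  [∀ n : ℤ, (CategoryTheory.shiftFunctor Cst n).Additive] [Pretriangulated Cst]
  [HasFiniteBiproducts Cst] [∀ X Y : Cst, FiniteDimensional k (X ⟶ Y)]

/-- The triangulated category `Cst` is 2-Calabi–Yau: a family of linear trace forms
makes the composition pairings `C(Y, Σ²X) × C(X, Y) → k` non-degenerate. -/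
def IsTwoCYst : Prop :=
  ∃ t : ∀ X : Cst, (X ⟶ X⟦(2 : ℤ)⟧) →ₗ[k] k,
    ∀ X Y : Cst,
      (∀ f : Y ⟶ X⟦(2 : ℤ)⟧, (∀ g : X ⟶ Y, t X (g ≫ f) = 0) → f = 0) ∧
      (∀ g : X ⟶ Y, (∀ f : Y ⟶ X⟦(2 : ℤ)⟧, t X (g ≫ f) = 0) → g = 0)

variable {E Cst}

/-- `π : E ⥤ Cst` realizes the triangulated category `Cst` as the stable category of the
Frobenius category `(E, ε)`. -/
structure IsStableQuotient (ε : ExStruct E) (π : E ⥤ Cst) : Prop where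
  ess_surj : ∀ Y : Cst, ∃ X : E, Nonempty (π.obj X ≅ Y)
  full : ∀ X Y : E, Function.Surjective (π.map : (X ⟶ Y) → (π.obj X ⟶ π.obj Y))
  map_eq_zero_iff : ∀ (X Y : E) (f : X ⟶ Y), π.map f = 0 ↔
      ∃ (P : E) (p : X ⟶ P) (q : P ⟶ Y), ε.Proj P ∧ p ≫ q = f
  additive : ∀ (X Y : E) (f g : X ⟶ Y), π.map (f + g) = π.map f + π.map g
  conf_triangle : ∀ {X Y Z : E} (f : X ⟶ Y) (g : Y ⟶ Z), ε.IsConf f g →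
      ∃ δ : π.obj Z ⟶ (π.obj X)⟦(1 : ℤ)⟧,
        Triangle.mk (π.map f) (π.map g) δ ∈ distTriang Cst

/-- `dim_k Ext¹_ℰ(L, M) = d`, computed in the stable category as
`dim_k Hom(π L, (π M)[1])`. -/
def Ext1DimEq (π : E ⥤ Cst) (L M : E) (d : ℕ) : Prop :=
  Module.finrank k (π.obj L ⟶ (π.obj M)⟦(1 : ℤ)⟧) = d

end Stable

/-! ### Modules over the endomorphism algebra, and `F`-exact projective resolutions -/

section ModSide

variable {k : Type} [Field k]
variable {E : Type u} [Category.{v} E] [Preadditive E] [CategoryTheory.Linear k E]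

/-- `Hom_ℰ(T, X)` as a left module over `C = (End T)ᵐᵒᵖ`, via precomposition; this is the
value `F X` of the functor `F = Hom_ℰ(T, ?) : ℰ → mod C`. -/
instance homModule (T X : E) : Module (End T)ᵐᵒᵖ (T ⟶ X) where
  smul φ f := φ.unop ≫ f
  one_smul f := Category.id_comp f
  mul_smul a b f := Category.assoc _ _ _
  smul_zero φ := Limits.comp_zero
  smul_add φ f g := Preadditive.comp_add _ _ _ _ _ _
  add_smul a b f := Preadditive.add_comp _ _ _ _ _ _
  zero_smul f := Limits.zero_comp

/-- The `C`-module `F X = Hom_ℰ(T, X)`. -/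
def Fmod (T X : E) : ModuleCat (End T)ᵐᵒᵖ := ModuleCat.of _ (T ⟶ X)

/-- Precomposition with `f`, as a `k`-linear map between Hom spaces. -/
def precompLin (k : Type) [Field k] {D : Type u} [Category.{v} D] [Preadditive D]
    [CategoryTheory.Linear k D] {A B : D} (f : A ⟶ B) (Z : D) :
    (B ⟶ Z) →ₗ[k] (A ⟶ Z) where
  toFun h := f ≫ h
  map_add' h h' := Preadditive.comp_add _ _ _ _ _ _
  map_smul' a h := by simp

end ModSide

section FRes

variable {k : Type} [Field k]
variable {E : Type u} [Category.{v} E] [Preadditive E] [CategoryTheory.Linear k E]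
  [HasZeroObject E] [HasFiniteBiproducts E] [HasBinaryBiproducts E]
  [∀ X Y : E, FiniteDimensional k (X ⟶ Y)]

/-- A projective resolution of `X` for the exact structure on `ℰ` given by the `F`-exact
conflations (`F = Hom(T, ?)`): the projectives of this exact structure are the objects of
`add T`, and the resolution is spliced from `F`-exact conflations
`0 → K_{m+1} → P_m → K_m → 0` with `K_0 = X`. -/
structure FProjRes (ε : ExStruct E) (T X : E) where
  P : ℕ → E
  K : ℕ → E
  iso0 : K 0 ≅ X
  ι : ∀ m : ℕ, K (m + 1) ⟶ P m
  pr : ∀ m : ℕ, P m ⟶ K m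
  conf : ∀ m, ε.IsConf (ι m) (pr m)
  fexact : ∀ m, ∀ q : T ⟶ K m, ∃ l : T ⟶ P m, l ≫ pr m = q
  projT : ∀ m, InAdd E T (P m)

end FRes

/-!
`F = Hom_ℰ(T, ?)` is fully faithful on `add T`: on `T` itself this is the Yoneda lemma
(`Hom_C(C, M) = M`), and the property passes to finite direct sums and direct summands; for the
same reason `F` sends `add T` to projective `C`-modules. Applying `F` to the conflations
`0 → K_{m+1} → P_m → K_m → 0` of an `F`-exact resolution of `X` therefore gives a projective
resolution `F P_•` of `F X`, because `F`-exactness is precisely exactness after applying `F`.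
By full faithfulness on `add T`, `Hom_C(F P_•, F Z)` is `Hom_ℰ(P_•, Z)`, whose cycles in degree
`i + 1` are `Hom_ℰ(K_{i+1}, Z)` since each `P_{m+1} → P_m → K_m → 0` is right exact. The same
right exactness makes `F` fully faithful on every `K_m`, hence on `X = K_0`: this is degree `0`.
-/

section FExactResolutions

variable {E : Type u} [Category.{v} E] [Preadditive E]

lemma Fmod.hom_apply_comp {T X W : E} (β : Fmod T X ⟶ Fmod T W) (c : T ⟶ T) (t : T ⟶ X) :
    β (c ≫ t) = c ≫ β t :=
  β.hom.map_smul (MulOpposite.op c) t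

def Fmod.selfBasis (T : E) : Module.Basis Unit (End T)ᵐᵒᵖ (Fmod T T) :=
  (Module.Basis.singleton Unit (End T)ᵐᵒᵖ).map
    { toFun := MulOpposite.unop
      invFun := MulOpposite.op
      map_add' := fun _ _ => rfl
      map_smul' := fun _ _ => rfl
      left_inv := fun _ => rfl
      right_inv := fun _ => rfl }

def coyonedaModule (T : E) : E ⥤ ModuleCat (End T)ᵐᵒᵖ where
  obj := Fmod T
  map f := ModuleCat.ofHom
    { toFun := fun t => t ≫ f
      map_add' := fun _ _ => Preadditive.add_comp _ _ _ _ _ _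
      map_smul' := fun _ _ => Category.assoc _ _ _ }
  map_id X := by ext t; exact Category.comp_id t
  map_comp f g := by ext t; exact (Category.assoc _ _ _).symm

namespace coyonedaModule

variable (T : E)

instance : (coyonedaModule T).Additive where
  map_add {_ _ f g} := by ext t; exact Preadditive.comp_add _ _ _ _ f g

instance {k : Type} [Field k] [Linear k E] : (coyonedaModule T).Linear k where
  map_smul {X Y} f a := by
    ext (t : T ⟶ X)
    change t ≫ (a • f) = (algebraMap k (End T)ᵐᵒᵖ a).unop ≫ t ≫ f
    rw [MulOpposite.algebraMap_apply, MulOpposite.unop_op, Algebra.algebraMap_eq_smul_one]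
    change t ≫ (a • f) = (a • 𝟙 T) ≫ t ≫ f
    rw [Linear.comp_smul, Linear.smul_comp, Category.id_comp]

end coyonedaModule

def IsHomBijective (T P : E) : Prop :=
  ∀ W : E, Function.Bijective
    ((coyonedaModule T).map : (P ⟶ W) → ((coyonedaModule T).obj P ⟶ (coyonedaModule T).obj W))

lemma isHomBijective_self (T : E) : IsHomBijective T T := fun W =>
  ⟨fun f g hfg => by
    have h : 𝟙 T ≫ f = 𝟙 T ≫ g := ConcreteCategory.congr_hom hfg (𝟙 T)
    rwa [Category.id_comp, Category.id_comp] at h,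
   fun β => ⟨β (𝟙 T), ModuleCat.hom_ext (LinearMap.ext fun (t : T ⟶ T) =>
    (Fmod.hom_apply_comp β t (𝟙 T)).symm.trans (congrArg β (Category.comp_id t)))⟩⟩

namespace IsHomBijective

variable {T : E}

lemma of_retract {P Q : E} (r : Retract P Q) (hQ : IsHomBijective T Q) :
    IsHomBijective T P := fun W => by
  refine ⟨fun f g hfg => ?_, fun β => ?_⟩
  · have : r.r ≫ f = r.r ≫ g := (hQ W).injective (by simp only [Functor.map_comp, hfg])
    simpa using r.i ≫= this
  · obtain ⟨g, hg⟩ := (hQ W).surjective ((coyonedaModule T).map r.r ≫ β)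
    refine ⟨r.i ≫ g, ?_⟩
    rw [Functor.map_comp, hg, ← Category.assoc, ← Functor.map_comp, r.retract,
      CategoryTheory.Functor.map_id, Category.id_comp]

lemma biproduct {ι : Type} [Fintype ι] (f : ι → E) [HasBiproduct f]
    (hf : ∀ j, IsHomBijective T (f j)) : IsHomBijective T (⨁ f) := fun W => by
  refine ⟨fun a b hab => biproduct.hom_ext' _ _ fun j => (hf j W).injective ?_, fun β => ?_⟩
  · simp only [Functor.map_comp, hab]
  · choose g hg using fun j =>
      (hf j W).surjective ((coyonedaModule T).map (biproduct.ι f j) ≫ β)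
    refine ⟨biproduct.desc g, ?_⟩
    calc (coyonedaModule T).map (biproduct.desc g)
        = ∑ j, (coyonedaModule T).map (biproduct.π f j) ≫
            (coyonedaModule T).map (biproduct.ι f j) ≫ β := by
          simp only [biproduct.desc_eq, Functor.map_sum, Functor.map_comp, hg]
      _ = (coyonedaModule T).map (∑ j, biproduct.π f j ≫ biproduct.ι f j) ≫ β := by
          simp only [Functor.map_sum, Functor.map_comp, Preadditive.sum_comp, Category.assoc]
      _ = β := by rw [biproduct.total, CategoryTheory.Functor.map_id, Category.id_comp]

end IsHomBijective

variable [HasBinaryBiproducts E]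

namespace ExStruct

variable {ε : ExStruct E} {X Y Z : E} {f : X ⟶ Y} {g : Y ⟶ Z}

lemma mono_of_isConf (h : ε.IsConf f g) : Mono f where
  right_cancellation u v huv := by
    obtain ⟨_, -, hu⟩ := ε.is_kernel f g h (u ≫ f)
      (by rw [Category.assoc, ε.comp_zero f g h, Limits.comp_zero])
    rw [hu u rfl, hu v huv.symm]

lemma epi_of_isConf (h : ε.IsConf f g) : Epi g where
  left_cancellation u v huv := by
    obtain ⟨_, -, hu⟩ := ε.is_cokernel f g h (g ≫ u)
      (by rw [← Category.assoc, ε.comp_zero f g h, Limits.zero_comp])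
    rw [hu u rfl, hu v huv.symm]

end ExStruct

variable [HasFiniteBiproducts E] {T : E}

namespace InAdd

lemma exists_retract {P : E} (hP : InAdd E T P) :
    ∃ m : ℕ, Nonempty (Retract P (⨁ fun _ : Fin m => T)) := by
  obtain ⟨m, Z, ⟨e⟩⟩ := hP
  exact ⟨m, ⟨⟨biprod.inl ≫ e.hom, e.inv ≫ biprod.fst, by simp⟩⟩⟩

lemma isHomBijective {P : E} (hP : InAdd E T P) : IsHomBijective T P := by
  obtain ⟨m, ⟨r⟩⟩ := hP.exists_retract
  exact (IsHomBijective.biproduct _ fun _ => isHomBijective_self T).of_retract r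

lemma projective {P : E} (hP : InAdd E T P) : Projective ((coyonedaModule T).obj P) := by
  obtain ⟨m, ⟨r⟩⟩ := hP.exists_retract
  have : Projective ((coyonedaModule T).obj (⨁ fun _ : Fin m => T)) :=
    Projective.of_iso ((coyonedaModule T).mapBiproduct _ ≪≫ ModuleCat.biproductIsoPi _).symm
      (ModuleCat.projective_of_free (Pi.basis fun _ => Fmod.selfBasis T))
  exact (r.map (coyonedaModule T)).projective

end InAdd

namespace FProjRes

variable {ε : ExStruct E} {X : E} (R : FProjRes ε T X)

def d (n : ℕ) : R.P (n + 1) ⟶ R.P n := R.pr (n + 1) ≫ R.ι n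

lemma ι_pr (n : ℕ) : R.ι n ≫ R.pr n = 0 := ε.comp_zero _ _ (R.conf n)

lemma d_pr (n : ℕ) : R.d n ≫ R.pr n = 0 := by
  rw [d, Category.assoc, ι_pr, comp_zero]

lemma d_d (n : ℕ) : R.d (n + 1) ≫ R.d n = 0 := by
  rw [d, Category.assoc, d, ← Category.assoc (R.ι (n + 1)), ι_pr, zero_comp, comp_zero]

instance (n : ℕ) : Mono (R.ι n) := ε.mono_of_isConf (R.conf n)

instance (n : ℕ) : Epi (R.pr n) := ε.epi_of_isConf (R.conf n)

lemma exists_comp_d {n : ℕ} {t : T ⟶ R.P n} (ht : t ≫ R.pr n = 0) :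
    ∃ y : T ⟶ R.P (n + 1), y ≫ R.d n = t := by
  obtain ⟨l, hl, -⟩ := ε.is_kernel (R.ι n) (R.pr n) (R.conf n) t ht
  obtain ⟨y, hy⟩ := R.fexact (n + 1) l
  exact ⟨y, by rw [d, ← Category.assoc, hy, hl]⟩

lemma map_pr_comp_injective (n : ℕ) (W : E) :
    Function.Injective fun u : R.K n ⟶ W => (coyonedaModule T).map (R.pr n ≫ u) :=
  fun _ _ h => (cancel_epi _).1 (((R.projT n).isHomBijective W).injective h)

lemma exists_map_pr_comp_eq {n : ℕ} {W : E}
    (h : (coyonedaModule T).obj (R.P n) ⟶ (coyonedaModule T).obj W)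
    (hh : (coyonedaModule T).map (R.d n) ≫ h = 0) :
    ∃ u : R.K n ⟶ W, (coyonedaModule T).map (R.pr n ≫ u) = h := by
  obtain ⟨g, rfl⟩ := ((R.projT n).isHomBijective W).surjective h
  have hdg : R.d n ≫ g = 0 := ((R.projT (n + 1)).isHomBijective W).injective <| by
    rw [Functor.map_comp, hh, Functor.map_zero]
  have hιg : R.ι n ≫ g = 0 :=
    (cancel_epi (R.pr (n + 1))).1 <| by rw [comp_zero, ← hdg, d, Category.assoc]
  obtain ⟨u, hu, -⟩ := ε.is_cokernel (R.ι n) (R.pr n) (R.conf n) g hιg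
  exact ⟨u, by rw [hu]⟩

lemma isHomBijective_K (n : ℕ) : IsHomBijective T (R.K n) := fun W => by
  refine ⟨fun u v huv => R.map_pr_comp_injective n W ?_, fun β => ?_⟩
  · simp only [Functor.map_comp, huv]
  · obtain ⟨u, hu⟩ := R.exists_map_pr_comp_eq ((coyonedaModule T).map (R.pr n) ≫ β) <| by
      rw [← Category.assoc, ← Functor.map_comp, d_pr, Functor.map_zero, zero_comp]
    have : Epi ((coyonedaModule T).map (R.pr n)) :=
      (ModuleCat.epi_iff_surjective _).2 (R.fexact n)
    rw [Functor.map_comp, cancel_epi] at hu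
    exact ⟨u, hu⟩

lemma isHomBijective (R : FProjRes ε T X) : IsHomBijective T X :=
  (R.isHomBijective_K 0).of_retract (Retract.ofIso R.iso0.symm)

def mapComplex : ChainComplex (ModuleCat (End T)ᵐᵒᵖ) ℕ :=
  ChainComplex.of (fun n => (coyonedaModule T).obj (R.P n))
    (fun n => (coyonedaModule T).map (R.d n))
    (fun n => by rw [← Functor.map_comp, d_d, Functor.map_zero])

lemma mapComplex_d (n : ℕ) : R.mapComplex.d (n + 1) n = (coyonedaModule T).map (R.d n) :=
  ChainComplex.of_d (fun n => (coyonedaModule T).obj (R.P n))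
    (fun n => (coyonedaModule T).map (R.d n)) n

lemma mapComplex_exactAt_succ (n : ℕ) : R.mapComplex.ExactAt (n + 1) := by
  rw [HomologicalComplex.exactAt_iff' _ (n + 2) (n + 1) n (by simp) (by simp),
    ShortComplex.moduleCat_exact_iff]
  intro (x : T ⟶ R.P (n + 1)) hx
  rw [HomologicalComplex.shortComplexFunctor'_obj_g, mapComplex_d] at hx
  replace hx : x ≫ R.pr (n + 1) ≫ R.ι n = 0 := hx
  obtain ⟨y, hy⟩ := R.exists_comp_d (n := n + 1) <|
    (cancel_mono (R.ι n)).1 (by rw [Category.assoc, hx, zero_comp])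
  refine ⟨y, ?_⟩
  rw [HomologicalComplex.shortComplexFunctor'_obj_f, mapComplex_d]
  exact hy

def augmentation : R.mapComplex ⟶ (ChainComplex.single₀ _).obj ((coyonedaModule T).obj X) :=
  (ChainComplex.toSingle₀Equiv _ _).symm ⟨(coyonedaModule T).map (R.pr 0 ≫ R.iso0.hom), by
    rw [mapComplex_d]
    refine ((coyonedaModule T).map_comp _ _).symm.trans ?_
    rw [← Category.assoc, d_pr, zero_comp, Functor.map_zero]
    rfl⟩

lemma augmentation_f_zero :
    R.augmentation.f 0 = (coyonedaModule T).map (R.pr 0 ≫ R.iso0.hom) :=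
  ChainComplex.toSingle₀Equiv_symm_apply_f_zero _ _

lemma augmentation_quasiIsoAt_zero : QuasiIsoAt R.augmentation 0 := by
  rw [ChainComplex.quasiIsoAt₀_iff, ShortComplex.quasiIso_iff_of_zeros' _ rfl rfl rfl]
  refine ⟨(ShortComplex.moduleCat_exact_iff _).2 fun (x : T ⟶ R.P 0) hx => ?_, ?_⟩
  · replace hx : R.augmentation.f 0 x = 0 := hx
    rw [augmentation_f_zero] at hx
    replace hx : x ≫ R.pr 0 ≫ R.iso0.hom = 0 := hx
    obtain ⟨y, hy⟩ := R.exists_comp_d (n := 0) <|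
      (cancel_mono R.iso0.hom).1 (by rw [Category.assoc, hx, zero_comp])
    refine ⟨y, show R.mapComplex.d 1 0 y = x from ?_⟩
    rw [mapComplex_d]
    exact hy
  · change Epi (R.augmentation.f 0)
    rw [augmentation_f_zero]
    refine (ModuleCat.epi_iff_surjective _).2 fun (t : T ⟶ X) => ?_
    obtain ⟨l, hl⟩ := R.fexact 0 (t ≫ R.iso0.inv)
    refine ⟨l, show l ≫ R.pr 0 ≫ R.iso0.hom = t from ?_⟩
    rw [← Category.assoc, hl, Category.assoc, Iso.inv_hom_id, Category.comp_id]

def projectiveResolution : ProjectiveResolution ((coyonedaModule T).obj X) where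
  complex := R.mapComplex
  projective n := (R.projT n).projective
  π := R.augmentation
  quasiIso := ⟨fun n => by
    cases n with
    | zero => exact R.augmentation_quasiIsoAt_zero
    | succ n =>
      rw [quasiIsoAt_iff_exactAt' _ _ (ChainComplex.exactAt_succ_single_obj _ _)]
      exact R.mapComplex_exactAt_succ n⟩

variable (k : Type) [Field k] [Linear k E] (Z : E)

abbrev homShortComplex (i : ℕ) : ShortComplex (ModuleCat k) :=
  (R.mapComplex.linearYonedaObj k ((coyonedaModule T).obj Z)).sc' i (i + 1) (i + 2)

lemma linearYonedaObj_d_apply (n : ℕ)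
    (h : (coyonedaModule T).obj (R.P n) ⟶ (coyonedaModule T).obj Z) :
    (R.mapComplex.linearYonedaObj k ((coyonedaModule T).obj Z)).d n (n + 1) h =
      (coyonedaModule T).map (R.d n) ≫ h := by
  rw [ChainComplex.linearYonedaObj_d]
  exact congrArg (· ≫ h) (R.mapComplex_d n)

lemma homShortComplex_f_apply (i : ℕ) (h : (R.homShortComplex k Z i).X₁) :
    (R.homShortComplex k Z i).f h = (coyonedaModule T).map (R.d i) ≫ h :=
  R.linearYonedaObj_d_apply k Z i h

lemma mem_ker_homShortComplex_g_iff {i : ℕ} (h : (R.homShortComplex k Z i).X₂) :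
    h ∈ LinearMap.ker (R.homShortComplex k Z i).g.hom ↔
      (coyonedaModule T).map (R.d (i + 1)) ≫ h = 0 :=
  LinearMap.mem_ker.trans (Eq.congr_left (R.linearYonedaObj_d_apply k Z (i + 1) h))

lemma map_pr_comp_mem_ker (i : ℕ) (u : R.K (i + 1) ⟶ Z) :
    ((coyonedaModule T).map (R.pr (i + 1) ≫ u) : (R.homShortComplex k Z i).X₂) ∈
      LinearMap.ker (R.homShortComplex k Z i).g.hom := by
  refine (R.mem_ker_homShortComplex_g_iff k Z _).2 ?_
  rw [← Functor.map_comp, ← Category.assoc, d_pr, zero_comp, Functor.map_zero]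

def cyclesEquiv (i : ℕ) :
    (R.K (i + 1) ⟶ Z) ≃ₗ[k] LinearMap.ker (R.homShortComplex k Z i).g.hom :=
  LinearEquiv.ofBijective
    (LinearMap.codRestrict _
      ((coyonedaModule T).mapLinearMap k ∘ₗ precompLin k (R.pr (i + 1)) Z :
        (R.K (i + 1) ⟶ Z) →ₗ[k] (R.homShortComplex k Z i).X₂)
      (R.map_pr_comp_mem_ker k Z i))
    ⟨fun u v huv => R.map_pr_comp_injective _ Z (congrArg Subtype.val huv), fun ⟨h, hh⟩ => by
      obtain ⟨u, hu⟩ := R.exists_map_pr_comp_eq h ((R.mem_ker_homShortComplex_g_iff k Z h).1 hh)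
      exact ⟨u, Subtype.ext hu⟩⟩

lemma map_range_precompLin (i : ℕ) :
    (LinearMap.range (precompLin k (R.ι i) Z)).map (R.cyclesEquiv k Z i).toLinearMap =
      LinearMap.range (R.homShortComplex k Z i).moduleCatToCycles := by
  have hcomm : (R.cyclesEquiv k Z i).toLinearMap ∘ₗ precompLin k (R.ι i) Z =
      (R.homShortComplex k Z i).moduleCatToCycles ∘ₗ (coyonedaModule T).mapLinearMap k := by
    refine LinearMap.ext fun w => Subtype.ext ?_
    change (coyonedaModule T).map (R.pr (i + 1) ≫ R.ι i ≫ w) = (R.homShortComplex k Z i).f _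
    rw [homShortComplex_f_apply, ← Category.assoc]
    exact (coyonedaModule T).map_comp (R.d i) w
  rw [← LinearMap.range_comp, hcomm]
  exact LinearMap.range_comp_of_range_eq_top _
    (LinearMap.range_eq_top.2 ((R.projT i).isHomBijective Z).surjective)

def extEquiv (i : ℕ) :
    ((R.K (i + 1) ⟶ Z) ⧸ LinearMap.range (precompLin k (R.ι i) Z)) ≃ₗ[k]
      ((Ext k (ModuleCat (End T)ᵐᵒᵖ) (i + 1)).obj
        (Opposite.op ((coyonedaModule T).obj X))).obj ((coyonedaModule T).obj Z) :=
  (Submodule.Quotient.equiv _ _ (R.cyclesEquiv k Z i) (R.map_range_precompLin k Z i)).trans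
    (R.projectiveResolution.isoExt (i + 1) _ ≪≫
      HomologicalComplex.homologyIsoSc' _ i (i + 1) (i + 2) (by simp) (by simp) ≪≫
      ShortComplex.moduleCatHomologyIso _).toLinearEquiv.symm

end FProjRes

end FExactResolutions

/-! ### Setting: a Hom-finite Frobenius category whose stable category is 2-Calabi–Yau -/

variable {k : Type} [Field k]
variable {E : Type u} [Category.{v} E] [Preadditive E] [CategoryTheory.Linear k E]
  [HasZeroObject E] [HasFiniteBiproducts E] [HasBinaryBiproducts E]
  [∀ X Y : E, FiniteDimensional k (X ⟶ Y)]
variable {Cst : Type u'} [Category.{v'} Cst] [Preadditive Cst]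
  [CategoryTheory.Linear k Cst] [HasZeroObject Cst] [HasShift Cst ℤ]
  [∀ n : ℤ, (CategoryTheory.shiftFunctor Cst n).Additive] [Pretriangulated Cst]
  [HasFiniteBiproducts Cst] [∀ X Y : Cst, FiniteDimensional k (X ⟶ Y)]

theorem stmt_9_general
    (ε : ExStruct E)
    (T : E)
    (X Z : E) (R : FProjRes ε T X) :
    -- degree 0: `Hom_ℰ(X, Z) ≅ Hom_C(F X, F Z)`
    Nonempty ((X ⟶ Z) ≃ₗ[k] (Fmod T X ⟶ Fmod T Z)) ∧
    -- degree `i + 1`: `Ext_F^{i+1}(X, Z) ≅ Ext_C^{i+1}(F X, F Z)`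
    (∀ i : ℕ,
      Nonempty
        (((R.K (i + 1) ⟶ Z) ⧸ LinearMap.range (precompLin k (R.ι i) Z)) ≃ₗ[k]
          (((Ext k (ModuleCat (End T)ᵐᵒᵖ) (i + 1)).obj
              (Opposite.op (Fmod T X))).obj (Fmod T Z)))) :=
  ⟨⟨LinearEquiv.ofBijective ((coyonedaModule T).mapLinearMap k) (R.isHomBijective Z)⟩,
    fun i => ⟨R.extEquiv k Z i⟩⟩

theorem stmt_9
    (ε : ExStruct E) (hfrob : ε.IsFrobenius)
    (π : E ⥤ Cst) (hstq : IsStableQuotient ε π) (h2cy : IsTwoCYst k Cst)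
    (T : E) (hct : ε.IsCT T)
    (X Z : E) (R : FProjRes ε T X) :
    -- degree 0: `Hom_ℰ(X, Z) ≅ Hom_C(F X, F Z)`
    Nonempty ((X ⟶ Z) ≃ₗ[k] (Fmod T X ⟶ Fmod T Z)) ∧
    -- degree `i + 1`: `Ext_F^{i+1}(X, Z) ≅ Ext_C^{i+1}(F X, F Z)`
    (∀ i : ℕ,
      Nonempty
        (((R.K (i + 1) ⟶ Z) ⧸ LinearMap.range (precompLin k (R.ι i) Z)) ≃ₗ[k]
          (((Ext k (ModuleCat (End T)ᵐᵒᵖ) (i + 1)).obj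
              (Opposite.op (Fmod T X))).obj (Fmod T Z)))) :=
  stmt_9_general ε T X Z R
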